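/- arXiv:1506.05835 — 2 statements merged into one kernel-verified Lean document; each statement's English description precedes it below -/
import Mathlib

section
/- Let T be a homeomorphism of a compact metric space X and K ⊆ X a compact invariant set. Suppose that for every ε > 0 there exists a finite set A_ε ⊆ X such that K ⊆ U_ε(T^k(A_ε)) for all k ∈ ℤ, where U_ε denotes the ε-neighborhood. Then K is contained in the closure of the set of minimal points of (X,T). -/
open Metric Filter Set Topology
open scoped Classical

variable {X : Type*}

/-- A set of naturals is syndetic: bounded gaps. -/
def Syndetic (S : Set ℕ) : Prop := ∃ n : ℕ, ∀ m : ℕ, ∃ k ∈ S, m ≤ k ∧ k ≤ m + n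

/-- Forward orbit of a point. -/
def fwdOrbit (T : X → X) (y : X) : Set X := Set.range fun k : ℕ => T^[k] y

/-- A point is minimal (almost periodic): its forward orbit closure is a minimal set. -/
def IsMinimalPt [TopologicalSpace X] (T : X → X) (y : X) : Prop :=
  ∀ z ∈ closure (fwdOrbit T y), closure (fwdOrbit T z) = closure (fwdOrbit T y)

/-- ℤ-iteration of a homeomorphism. -/
noncomputable def zIter [TopologicalSpace X] (T : X ≃ₜ X) (n : ℤ) : X → X :=
  if 0 ≤ n then (⇑T)^[n.toNat] else (⇑T.symm)^[(-n).toNat]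

/-- `A` is an `ε`-network: every point of the space is within `ε` of `A`. -/
def IsNet [PseudoMetricSpace X] (ε : ℝ) (A : Set X) : Prop :=
  ∀ x : X, ∃ a ∈ A, dist x a ≤ ε

/-- A point is nonwandering (w.r.t. forward iterates). -/
def NonWandering [TopologicalSpace X] (T : X → X) (x : X) : Prop :=
  ∀ U : Set X, IsOpen U → x ∈ U → ∃ k : ℕ, 1 ≤ k ∧ ((fun p => T^[k] p) '' U ∩ U).Nonempty

/-- One-sided `d`-pseudotrajectory. -/
def IsPseudoTraj [PseudoMetricSpace X] (T : X → X) (d : ℝ) (x : ℕ → X) : Prop :=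
  ∀ k : ℕ, dist (x (k + 1)) (T (x k)) ≤ d

/-- Two-sided `d`-pseudotrajectory. -/
def IsPseudoTrajZ [PseudoMetricSpace X] (T : X → X) (d : ℝ) (x : ℤ → X) : Prop :=
  ∀ k : ℤ, dist (x (k + 1)) (T (x k)) ≤ d

/-- A chain recurrent point. -/
def ChainRec [PseudoMetricSpace X] (T : X → X) (x : X) : Prop :=
  ∀ d > (0 : ℝ), ∃ n : ℕ, 1 ≤ n ∧ ∃ c : ℕ → X, c 0 = x ∧ c n = x ∧
    ∀ k < n, dist (c (k + 1)) (T (c k)) ≤ d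

/-- ω-limit set of a point under a map. -/
def omegaSet [TopologicalSpace X] (T : X → X) (y : X) : Set X :=
  {p | ∃ φ : ℕ → ℕ, StrictMono φ ∧ Tendsto (fun n => T^[φ n] y) atTop (nhds p)}

/-- The set of recurrent points (`x ∈ ω(x)`). -/
def RecurrentPts [TopologicalSpace X] (T : X → X) : Set X := {x | x ∈ omegaSet T x}

/-- The multishadowing property (for homeomorphisms, two-sided). -/
def Multishadowing [PseudoMetricSpace X] (T : X ≃ₜ X) : Prop :=
  ∀ ε > (0 : ℝ), ∃ d > (0 : ℝ), ∀ x : ℤ → X, IsPseudoTrajZ (⇑T) d x →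
    ∃ Y : Finset X, ∀ k : ℤ, ∃ y ∈ Y, dist (x k) (zIter T k y) < ε

/-- Topological support of a measure: points all of whose open neighborhoods
have positive measure. -/
def msupp [TopologicalSpace X] [MeasurableSpace X] (μ : MeasureTheory.Measure X) : Set X :=
  {x | ∀ U : Set X, IsOpen U → x ∈ U → 0 < μ U}

/-- Counting function for density computations. -/
noncomputable def cnt (K : Set ℕ) (N : ℕ) : ℝ :=
  ((Finset.range (N + 1)).filter (· ∈ K)).card


lemma fwdOrbit_subset {f : X → X} {M : Set X} (hinv : ∀ y ∈ M, f y ∈ M) {y : X} (hy : y ∈ M) :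
    fwdOrbit f y ⊆ M := by
  rintro _ ⟨k, rfl⟩
  induction k with
  | zero => simpa using hy
  | succ n ih =>
    show f^[n + 1] y ∈ M
    rw [Function.iterate_succ_apply']
    exact hinv _ ih

lemma closure_fwdOrbit_inv [TopologicalSpace X] {f : X → X} (hf : Continuous f) (y : X) :
    ∀ g ∈ closure (fwdOrbit f y), f g ∈ closure (fwdOrbit f y) := by
  intro g hg
  have h1 : f '' closure (fwdOrbit f y) ⊆ closure (f '' fwdOrbit f y) :=
    image_closure_subset_closure_image hf
  have h2 : f '' fwdOrbit f y ⊆ fwdOrbit f y := by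
    rintro _ ⟨_, ⟨k, rfl⟩, rfl⟩
    exact ⟨k + 1, by simp [Function.iterate_succ_apply']⟩
  exact closure_mono h2 (h1 (mem_image_of_mem f hg))

lemma aux_minimal [TopologicalSpace X] [CompactSpace X] {f : X → X} (hf : Continuous f)
    {C : Set X} (hC : IsClosed C) (hne : C.Nonempty) (hfinv : ∀ y ∈ C, f y ∈ C) :
    ∃ M, M ⊆ C ∧ M.Nonempty ∧ ∀ y ∈ M, closure (fwdOrbit f y) = M := by
  set S : Set (Set X) := {M | M.Nonempty ∧ IsClosed M ∧ (∀ y ∈ M, f y ∈ M) ∧ M ⊆ C} with hS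
  have hCS : C ∈ S := ⟨hne, hC, hfinv, Subset.rfl⟩
  have hzorn : ∀ c ⊆ S, IsChain (· ⊆ ·) c → c.Nonempty → ∃ lb ∈ S, ∀ s ∈ c, lb ⊆ s := by
    intro c hcS hchain hcne
    refine ⟨⋂₀ c, ⟨?_, ?_, ?_, ?_⟩, fun s hs => sInter_subset_of_mem hs⟩
    · rw [sInter_eq_iInter]
      haveI : Nonempty c := hcne.coe_sort
      refine IsCompact.nonempty_iInter_of_directed_nonempty_isCompact_isClosed _ ?_ ?_ ?_ ?_
      · intro s t
        rcases hchain.total s.2 t.2 with hst | hts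
        · exact ⟨s, le_refl _, hst⟩
        · exact ⟨t, hts, le_refl _⟩
      · exact fun s => (hcS s.2).1
      · exact fun s => (hcS s.2).2.1.isCompact
      · exact fun s => (hcS s.2).2.1
    · exact isClosed_sInter fun s hs => (hcS hs).2.1
    · intro y hy s hs
      exact (hcS hs).2.2.1 y (hy s hs)
    · obtain ⟨s, hs⟩ := hcne
      exact (sInter_subset_of_mem hs).trans (hcS hs).2.2.2
  obtain ⟨M, hMC, hMmin⟩ := zorn_superset_nonempty S hzorn C hCS
  obtain ⟨hMne, hMcl, hMinv, hMsubC⟩ := hMmin.prop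
  refine ⟨M, hMsubC, hMne, fun y hy => ?_⟩
  have hDM : closure (fwdOrbit f y) ⊆ M :=
    closure_minimal (fwdOrbit_subset hMinv hy) hMcl
  have hDS : closure (fwdOrbit f y) ∈ S :=
    ⟨⟨y, subset_closure ⟨0, rfl⟩⟩, isClosed_closure, closure_fwdOrbit_inv hf y,
      hDM.trans hMsubC⟩
  exact (hMmin.eq_of_superset hDS hDM).symm

lemma semiconj_closure_fwdOrbit {Y : Type*} [TopologicalSpace Y] [CompactSpace Y]
    [TopologicalSpace X] [T2Space X] {π : Y → X} (hπ : Continuous π) {S : Y → Y} {T : X → X}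
    (hsc : Function.Semiconj π S T) (w : Y) :
    closure (fwdOrbit T (π w)) = π '' closure (fwdOrbit S w) := by
  have him : π '' fwdOrbit S w = fwdOrbit T (π w) := by
    unfold fwdOrbit
    rw [← Set.range_comp]
    exact congrArg Set.range (funext fun k => (hsc.iterate_right k) w)
  have hcpt : IsCompact (π '' closure (fwdOrbit S w)) :=
    (isClosed_closure.isCompact).image hπ
  apply le_antisymm
  · apply closure_minimal _ hcpt.isClosed
    rw [← him]
    exact image_mono subset_closure
  · calc π '' closure (fwdOrbit S w) ⊆ closure (π '' fwdOrbit S w) :=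
          image_closure_subset_closure_image hπ
      _ = closure (fwdOrbit T (π w)) := by rw [him]

lemma zIter_natCast [TopologicalSpace X] (T : X ≃ₜ X) (k : ℕ) :
    zIter T (k : ℤ) = (⇑T)^[k] := by
  unfold zIter
  rw [if_pos (Int.natCast_nonneg k), Int.toNat_natCast]

theorem stmt6 [MetricSpace X] [CompactSpace X] (T : X ≃ₜ X)
    (K : Set X) (hKc : IsCompact K) (hKinv : ⇑T '' K = K)
    (h : ∀ ε > (0 : ℝ), ∃ A : Finset X, ∀ k : ℤ,
      K ⊆ Metric.thickening ε (zIter T k '' (A : Set X))) :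
    K ⊆ closure {y : X | IsMinimalPt (⇑T) y} := by
  intro x hx
  rw [Metric.mem_closure_iff]
  intro ε hε
  obtain ⟨A, hA⟩ := h (ε / 2) (by linarith)
  -- product space over A
  set P := (↥A) → X with hP
  set S : P → P := fun g a => T (g a) with hSdef
  have hScont : Continuous S := continuous_pi fun a => T.continuous.comp (continuous_apply a)
  set z : P := fun a => (a : X) with hz
  have hSk : ∀ (k : ℕ) (g : P) (a : ↥A), (S^[k] g) a = (⇑T)^[k] (g a) := by
    intro k
    induction k with
    | zero => intro g a; simp
    | succ n ih =>
      intro g a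
      rw [Function.iterate_succ_apply', Function.iterate_succ_apply']
      have : (S^[n] g) a = (⇑T)^[n] (g a) := ih g a
      show T ((S^[n] g) a) = T ((⇑T)^[n] (g a))
      rw [this]
  have hstep : ∀ k : ℕ, ∃ a : ↥A, dist x ((⇑T)^[k] (a : X)) < ε / 2 := by
    intro k
    have hmem := hA (k : ℤ) hx
    rw [Metric.mem_thickening_iff] at hmem
    obtain ⟨y, ⟨a, haA, rfl⟩, hdy⟩ := hmem
    refine ⟨⟨a, haA⟩, ?_⟩
    rwa [zIter_natCast] at hdy
  set C : Set P := {g | ∃ a : ↥A, dist x (g a) ≤ ε / 2} with hC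
  have hCclosed : IsClosed C := by
    have : C = ⋃ a : ↥A, (fun g : P => dist x (g a)) ⁻¹' (Set.Iic (ε / 2)) := by
      ext g; simp [hC, Set.mem_iUnion]
    rw [this]
    exact isClosed_iUnion_of_finite fun a =>
      IsClosed.preimage (continuous_const.dist (continuous_apply a)) isClosed_Iic
  have horb : fwdOrbit S z ⊆ C := by
    rintro _ ⟨k, rfl⟩
    obtain ⟨a, ha⟩ := hstep k
    exact ⟨a, by show dist x ((S^[k] z) a) ≤ ε / 2; rw [hSk k z a]; exact le_of_lt ha⟩
  have hM0cl : IsClosed (closure (fwdOrbit S z)) := isClosed_closure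
  have hM0ne : (closure (fwdOrbit S z)).Nonempty := ⟨z, subset_closure ⟨0, rfl⟩⟩
  have hM0inv := closure_fwdOrbit_inv hScont z
  obtain ⟨M, hMsub, ⟨w, hw⟩, hMmin⟩ := aux_minimal hScont hM0cl hM0ne hM0inv
  have hMC : M ⊆ C := hMsub.trans (closure_minimal horb hCclosed)
  obtain ⟨a, hwa⟩ := hMC hw
  set π : P → X := fun g => g a with hπ
  have hπcont : Continuous π := continuous_apply a
  have hsc : Function.Semiconj π S (⇑T) := fun g => rfl
  have key : ∀ g : P, closure (fwdOrbit (⇑T) (π g)) = π '' closure (fwdOrbit S g) :=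
    fun g => semiconj_closure_fwdOrbit hπcont hsc g
  refine ⟨w a, ?_, lt_of_le_of_lt hwa (by linarith)⟩
  show IsMinimalPt (⇑T) (w a)
  intro z' hz'
  have h1 : closure (fwdOrbit (⇑T) (w a)) = π '' M := by
    rw [show w a = π w from rfl, key w, hMmin w hw]
  rw [h1] at hz'
  obtain ⟨w', hw'M, rfl⟩ := hz'
  rw [show fwdOrbit (⇑T) (w' a) = fwdOrbit (⇑T) (π w') from rfl, key w', hMmin w' hw'M, h1]
end

section
/- Let T be a homeomorphism of a compact metric space X and μ a T-invariant Borel probability measure. If for every δ > 0 there exists a finite set A_δ such that μ(U_δ(T^n(A_δ))) > 1 − δ for every n ∈ ℤ, then supp μ is contained in the closure of the set of minimal points of (X,T). -/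
open Metric Filter Set Topology
open scoped Classical

variable {X : Type*}

def PSg (S : Set ℕ) (g : ℕ) : Prop :=
  ∀ N, ∃ m, ∀ j ≤ N, ∃ k ∈ S, m + j ≤ k ∧ k ≤ m + j + g

lemma psg_union_elim {U V : Set ℕ} {g : ℕ} (h : PSg (U ∪ V) g)
    (hV : ¬ ∃ g', PSg V g') : PSg U g := by
  push_neg at hV
  intro N
  have h1 := hV (N + g)
  unfold PSg at h1
  push_neg at h1
  obtain ⟨N₁, hN₁⟩ := h1
  obtain ⟨m₀, hm₀⟩ := h (N₁ + N)
  obtain ⟨j, hjN₁, hj⟩ := hN₁ m₀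
  refine ⟨m₀ + j, fun i hi => ?_⟩
  obtain ⟨k, hkUV, hk1, hk2⟩ := hm₀ (j + i) (by omega)
  refine ⟨k, ?_, by omega, by omega⟩
  rcases hkUV with hk | hk
  · exact hk
  · exact absurd (hj k hk (by omega)) (by omega)

lemma psg_partition {α : Type*} (A : Finset α) (S : α → Set ℕ) :
    ∀ g : ℕ, PSg {n | ∃ a ∈ A, n ∈ S a} g → ∃ a ∈ A, ∃ g', PSg (S a) g' := by
  induction A using Finset.induction_on with
  | empty =>
    intro g h
    obtain ⟨m, hm⟩ := h 0
    obtain ⟨k, hk, -⟩ := hm 0 le_rfl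
    simp at hk
  | @insert a A' ha IH =>
    intro g h
    by_cases hV : ∃ g', PSg {n | ∃ b ∈ A', n ∈ S b} g'
    · obtain ⟨g', hg'⟩ := hV
      obtain ⟨b, hb, hres⟩ := IH g' hg'
      exact ⟨b, Finset.mem_insert_of_mem hb, hres⟩
    · have heq : {n | ∃ b ∈ insert a A', n ∈ S b} = S a ∪ {n | ∃ b ∈ A', n ∈ S b} := by
        ext n; simp [Finset.mem_insert, or_and_right, exists_or]
      rw [heq] at h
      exact ⟨a, Finset.mem_insert_self a A', g, psg_union_elim h hV⟩

lemma pigeon_limit [MetricSpace X] {u : ℕ → X} {p : X}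
    (hu : Tendsto u atTop (𝓝 p)) (F : ℕ → X → X) (hF : ∀ d, Continuous (F d))
    (g : ℕ) (r : ℝ) (x : X) (h : ∀ n, ∃ d, d ≤ g ∧ dist (F d (u n)) x ≤ r) :
    ∃ d, d ≤ g ∧ dist (F d p) x ≤ r := by
  choose D hD hdist using h
  obtain ⟨y, hy⟩ := Finite.exists_infinite_fiber
    (fun n => (⟨D n, Nat.lt_succ_of_le (hD n)⟩ : Fin (g + 1)))
  have hinf : {n : ℕ | D n = y.val}.Infinite := by
    refine Set.Infinite.mono ?_ (Set.infinite_coe_iff.mp hy)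
    intro n hn
    simp only [Set.mem_preimage, Set.mem_singleton_iff] at hn
    simpa [Fin.ext_iff] using congrArg Fin.val hn
  have hfreq : ∃ᶠ n in atTop, D n = y.val := Nat.frequently_atTop_iff_infinite.mpr hinf
  refine ⟨y.val, Nat.lt_succ_iff.mp y.isLt, ?_⟩
  have hmem : ∃ᶠ n in atTop, F y.val (u n) ∈ closedBall x r := by
    refine hfreq.mono fun n hn => ?_
    rw [Metric.mem_closedBall, ← hn]
    exact hdist n
  have hten : Tendsto (fun n => F y.val (u n)) atTop (𝓝 (F y.val p)) :=
    ((hF y.val).tendsto p).comp hu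
  have := mem_closure_of_frequently_of_tendsto hmem hten
  rwa [IsClosed.closure_eq Metric.isClosed_closedBall, Metric.mem_closedBall] at this

lemma fwdOrbit_self (T : X → X) (y : X) : y ∈ fwdOrbit T y := ⟨0, rfl⟩

lemma mapsTo_fwdOrbit (T : X → X) (y : X) : MapsTo T (fwdOrbit T y) (fwdOrbit T y) := by
  rintro _ ⟨k, rfl⟩
  exact ⟨k + 1, by simp [Function.iterate_succ_apply']⟩

lemma mapsTo_closure_fwdOrbit [TopologicalSpace X] {T : X → X} (hT : Continuous T) (y : X) :
    MapsTo T (closure (fwdOrbit T y)) (closure (fwdOrbit T y)) := fun _ hp =>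
  map_mem_closure hT hp (mapsTo_fwdOrbit T y)

lemma exists_minimal_subset [TopologicalSpace X] [CompactSpace X] {T : X → X}
    (hT : Continuous T) {Ω : Set X} (hc : IsClosed Ω) (hne : Ω.Nonempty)
    (hinv : MapsTo T Ω Ω) :
    ∃ M ⊆ Ω, M.Nonempty ∧ IsClosed M ∧ MapsTo T M M ∧
      ∀ K, K ⊆ M → K.Nonempty → IsClosed K → MapsTo T K K → K = M := by
  set S : Set (Set X) := {K | K.Nonempty ∧ IsClosed K ∧ MapsTo T K K} with hS
  have H : ∀ c ⊆ S, IsChain (· ⊆ ·) c → c.Nonempty → ∃ lb ∈ S, ∀ s ∈ c, lb ⊆ s := by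
    intro c hcS hchain hcne
    have : Nonempty c := hcne.to_subtype
    have hdir : Directed (· ⊇ ·) (fun K : c => (K : Set X)) := by
      intro K₁ K₂
      rcases hchain.total K₁.2 K₂.2 with hle | hle
      · exact ⟨K₁, le_refl _, hle⟩
      · exact ⟨K₂, hle, le_refl _⟩
    have hnei : (⋂ K : c, (K : Set X)).Nonempty :=
      IsCompact.nonempty_iInter_of_directed_nonempty_isCompact_isClosed _ hdir
        (fun K => (hcS K.2).1) (fun K => (hcS K.2).2.1.isCompact) (fun K => (hcS K.2).2.1)
    refine ⟨⋂ K : c, (K : Set X), ⟨hnei, isClosed_iInter fun K => (hcS K.2).2.1, ?_⟩, ?_⟩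
    · intro p hp
      simp only [Set.mem_iInter] at hp ⊢
      exact fun K => (hcS K.2).2.2 (hp K)
    · intro s hs
      exact Set.iInter_subset (fun K : c => (K : Set X)) ⟨s, hs⟩
  obtain ⟨M, hMΩ, hMmin⟩ := zorn_superset_nonempty S H Ω ⟨hne, hc, hinv⟩
  obtain ⟨hMne, hMcl, hMinv⟩ := hMmin.prop
  exact ⟨M, hMΩ, hMne, hMcl, hMinv, fun K hKM hK1 hK2 hK3 =>
    hMmin.eq_of_le (y := K) ⟨hK1, hK2, hK3⟩ hKM⟩

lemma minimal_pt_of_mem [TopologicalSpace X] [CompactSpace X] {T : X → X}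
    (hT : Continuous T) {M : Set X} (hMcl : IsClosed M)
    (hMinv : MapsTo T M M)
    (hmin : ∀ K, K ⊆ M → K.Nonempty → IsClosed K → MapsTo T K K → K = M)
    {m : X} (hm : m ∈ M) : IsMinimalPt T m := by
  have horb : ∀ p ∈ M, closure (fwdOrbit T p) = M := by
    intro p hp
    refine hmin _ ?_ ⟨p, subset_closure (fwdOrbit_self T p)⟩ isClosed_closure
      (mapsTo_closure_fwdOrbit hT p)
    refine closure_minimal ?_ hMcl
    rintro _ ⟨k, rfl⟩
    exact hMinv.iterate k hp
  intro z hz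
  rw [horb m hm] at hz
  rw [horb m hm, horb z hz]


theorem stmt13 [MetricSpace X] [CompactSpace X] [MeasurableSpace X] [BorelSpace X]
    (T : X ≃ₜ X) (μ : MeasureTheory.Measure X) [MeasureTheory.IsProbabilityMeasure μ]
    (hinv : ∀ B : Set X, MeasurableSet B → μ (⇑T ⁻¹' B) = μ B)
    (h : ∀ δ > (0 : ℝ), ∃ A : Finset X, ∀ n : ℤ,
      1 - δ < (μ (Metric.thickening δ (zIter T n '' (A : Set X)))).toReal) :
    msupp μ ⊆ closure {y : X | IsMinimalPt (⇑T) y} := by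
  intro x hx
  rw [Metric.mem_closure_iff]
  intro ε hε
  have hμB : 0 < μ (ball x (ε/4)) := hx _ isOpen_ball (mem_ball_self (by positivity))
  set c := (μ (ball x (ε/4))).toReal with hcdef
  have hcpos : 0 < c := ENNReal.toReal_pos hμB.ne' (MeasureTheory.measure_ne_top μ _)
  set δ := min (ε/4) (c/2) with hδdef
  have hδ : 0 < δ := lt_min (by positivity) (by positivity)
  obtain ⟨A, hA⟩ := h δ hδ
  have cover : ∀ k : ℕ, ∃ a ∈ A, dist ((⇑T)^[k] a) x < ε/2 := by
    intro k
    set U := thickening δ ((⇑T)^[k] '' (A : Set X)) with hU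
    have hAk : 1 - δ < (μ U).toReal := by
      have hthis := hA (k : ℤ)
      have hz : zIter T (k : ℤ) = (⇑T)^[k] := by
        unfold zIter
        rw [if_pos (Int.natCast_nonneg k)]
        simp
      rwa [hz] at hthis
    have hne : (ball x (ε/4) ∩ U).Nonempty := by
      by_contra hemp
      have hsub : ball x (ε/4) ⊆ Uᶜ := fun p hp hpU => hemp ⟨p, hp, hpU⟩
      have h1 : μ (ball x (ε/4)) ≤ μ Uᶜ := MeasureTheory.measure_mono hsub
      have h2 : μ Uᶜ = 1 - μ U :=
        MeasureTheory.prob_compl_eq_one_sub isOpen_thickening.measurableSet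
      have h3 : (μ Uᶜ).toReal = 1 - (μ U).toReal := by
        rw [h2, ENNReal.toReal_sub_of_le MeasureTheory.prob_le_one ENNReal.one_ne_top]
        simp
      have h4 : c ≤ (μ Uᶜ).toReal := ENNReal.toReal_mono (MeasureTheory.measure_ne_top μ _) h1
      have h5 : c < δ := by rw [h3] at h4; linarith
      have h6 : δ ≤ c / 2 := min_le_right _ _
      linarith
    obtain ⟨p, hpB, hpU⟩ := hne
    rw [hU, Metric.mem_thickening_iff] at hpU
    obtain ⟨q, ⟨a, haA, rfl⟩, hq⟩ := hpU
    refine ⟨a, haA, ?_⟩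
    have h5 : dist ((⇑T)^[k] a) x ≤ dist ((⇑T)^[k] a) p + dist p x := dist_triangle _ _ _
    have hδ4 : δ ≤ ε/4 := min_le_left _ _
    have hpx : dist p x < ε/4 := mem_ball.mp hpB
    rw [dist_comm] at hq
    calc dist ((⇑T)^[k] a) x ≤ dist ((⇑T)^[k] a) p + dist p x := h5
      _ < δ + ε/4 := by exact add_lt_add hq hpx
      _ ≤ ε/2 := by linarith
  set S : X → Set ℕ := fun a => {n | dist ((⇑T)^[n] a) x < ε/2} with hSdef
  have hbase : PSg {n | ∃ a ∈ A, n ∈ S a} 0 := by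
    intro N
    refine ⟨0, fun j hj => ?_⟩
    obtain ⟨a, haA, hd⟩ := cover j
    exact ⟨j, ⟨a, haA, hd⟩, by omega, by omega⟩
  obtain ⟨a, -, g, hPS⟩ := psg_partition A S 0 hbase
  choose mfun hm using hPS
  obtain ⟨z, φ, hφ, hz⟩ := CompactSpace.tendsto_subseq (fun N => (⇑T)^[mfun N] a)
  have hsyn : ∀ j : ℕ, ∃ d, d ≤ g ∧ dist ((⇑T)^[j + d] z) x ≤ ε/2 := by
    intro j
    have hv : Tendsto (fun n => (⇑T)^[mfun (φ (n + j))] a) atTop (𝓝 z) :=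
      hz.comp (tendsto_add_atTop_nat j)
    refine pigeon_limit hv (fun d => (⇑T)^[j + d]) (fun d => T.continuous.iterate _)
      g (ε/2) x ?_
    intro n
    have hjN : j ≤ φ (n + j) := le_trans (Nat.le_add_left j n) hφ.le_apply
    obtain ⟨k, hkS, hk1, hk2⟩ := hm (φ (n + j)) j hjN
    refine ⟨k - (mfun (φ (n + j)) + j), by omega, ?_⟩
    show dist ((⇑T)^[j + (k - (mfun (φ (n + j)) + j))] ((⇑T)^[mfun (φ (n + j))] a)) x ≤ ε/2
    have heq : (⇑T)^[j + (k - (mfun (φ (n + j)) + j))] ((⇑T)^[mfun (φ (n + j))] a)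
        = (⇑T)^[k] a := by
      rw [← Function.iterate_add_apply]
      congr 1
      omega
    rw [heq]
    exact le_of_lt hkS
  obtain ⟨M, hMΩ, hMne, hMcl, hMinv, hmin⟩ := exists_minimal_subset T.continuous
    isClosed_closure ⟨z, subset_closure (fwdOrbit_self (⇑T) z)⟩
    (mapsTo_closure_fwdOrbit T.continuous z)
  obtain ⟨m₀, hm₀⟩ := hMne
  have hm₀Ω : m₀ ∈ closure (fwdOrbit (⇑T) z) := hMΩ hm₀
  rw [mem_closure_iff_seq_limit] at hm₀Ω
  obtain ⟨w, hwmem, hwlim⟩ := hm₀Ω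
  choose nseq hn using hwmem
  have hpt : ∀ t, ∃ d, d ≤ g ∧ dist ((⇑T)^[d] (w t)) x ≤ ε/2 := by
    intro t
    obtain ⟨d, hd, hdd⟩ := hsyn (nseq t)
    refine ⟨d, hd, ?_⟩
    have heq : (⇑T)^[d] (w t) = (⇑T)^[nseq t + d] z := by
      rw [← hn t, ← Function.iterate_add_apply]
      congr 1
      omega
    rw [heq]
    exact hdd
  obtain ⟨d, hd, hdist⟩ := pigeon_limit hwlim (fun d => (⇑T)^[d])
    (fun d => T.continuous.iterate _) g (ε/2) x hpt
  refine ⟨(⇑T)^[d] m₀, ?_, ?_⟩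
  · exact minimal_pt_of_mem T.continuous hMcl hMinv hmin (hMinv.iterate d hm₀)
  · rw [dist_comm]
    linarith
end
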